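/- arXiv:math/0611630 — 3 statements merged into one kernel-verified Lean document; each statement's English description precedes it below -/
import Mathlib

section
/- Every real trigonometric polynomial f(u,v) of bidegree at most (2,2) (second harmonics) can be written as a homogeneous quartic expression f = Σ α_{ijkl} x_i x_j x_k x_l in the four functions x₀ = cos(u/2)cos(v/2), x₁ = cos(u/2)sin(v/2), x₂ = sin(u/2)cos(v/2), x₃ = sin(u/2)sin(v/2), with real constants α_{ijkl}. -/
open Real

/-- The parametrization of the standard hyperboloid. -/
noncomputable def hypX (u v : ℝ) : Fin 4 → ℝ :=
  ![Real.cos (u / 2) * Real.cos (v / 2), Real.cos (u / 2) * Real.sin (v / 2),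
    Real.sin (u / 2) * Real.cos (v / 2), Real.sin (u / 2) * Real.sin (v / 2)]

noncomputable def mA (a : Fin 5) (t : ℝ) : ℝ :=
  Real.cos (t/2) ^ (a : ℕ) * Real.sin (t/2) ^ (4 - (a : ℕ))

noncomputable def Vu : Submodule ℝ (ℝ → ℝ) := Submodule.span ℝ (Set.range mA)

noncomputable def g4 (p : Fin 4 × Fin 4 × Fin 4 × Fin 4) : ℝ → ℝ → ℝ :=
  fun u v => hypX u v p.1 * hypX u v p.2.1 * hypX u v p.2.2.1 * hypX u v p.2.2.2

noncomputable def V : Submodule ℝ (ℝ → ℝ → ℝ) := Submodule.span ℝ (Set.range g4)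

def cidx (a b : Fin 5) (t : ℕ) : Fin 4 :=
  ⟨(if t < (a:ℕ) then 0 else 2) + (if t < (b:ℕ) then 0 else 1), by
    split <;> split <;> omega⟩

set_option maxHeartbeats 1000000 in
lemma mono_mem (a b : Fin 5) : (fun u v => mA a u * mA b v) ∈ V := by
  refine Submodule.subset_span ⟨(cidx a b 0, cidx a b 1, cidx a b 2, cidx a b 3), ?_⟩
  funext u v
  fin_cases a <;> fin_cases b <;>
    (simp only [g4, cidx, mA, hypX]; norm_num [Matrix.cons_val_zero, Matrix.cons_val_one]; ring_nf)

lemma mul_mem_V {g h : ℝ → ℝ} (hg : g ∈ Vu) (hh : h ∈ Vu) :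
    (fun u v => g u * h v) ∈ V := by
  refine Submodule.span_induction (p := fun g _ => (fun u v => g u * h v) ∈ V)
    ?_ ?_ ?_ ?_ hg
  · rintro _ ⟨a, rfl⟩
    refine Submodule.span_induction (p := fun h _ => (fun u v => mA a u * h v) ∈ V)
      ?_ ?_ ?_ ?_ hh
    · rintro _ ⟨b, rfl⟩; exact mono_mem a b
    · show (fun u v => mA a u * (0 : ℝ → ℝ) v) ∈ V
      have e : (fun u v => mA a u * (0 : ℝ → ℝ) v) = (0 : ℝ → ℝ → ℝ) := by
        funext u v; simp
      rw [e]; exact V.zero_mem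
    · intro x y _ _ ihx ihy
      show (fun u v => mA a u * (x + y) v) ∈ V
      have e : (fun u v => mA a u * (x + y) v)
          = (fun u v => mA a u * x v) + fun u v => mA a u * y v := by
        funext u v; simp [mul_add]
      rw [e]; exact V.add_mem ihx ihy
    · intro r x _ ih
      show (fun u v => mA a u * (r • x) v) ∈ V
      have e : (fun u v => mA a u * (r • x) v) = r • fun u v => mA a u * x v := by
        funext u v; simp; ring
      rw [e]; exact V.smul_mem r ih
  · show (fun u v => (0 : ℝ → ℝ) u * h v) ∈ V
    have e : (fun u v => (0 : ℝ → ℝ) u * h v) = (0 : ℝ → ℝ → ℝ) := by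
      funext u v; simp
    rw [e]; exact V.zero_mem
  · intro x y _ _ ihx ihy
    show (fun u v => (x + y) u * h v) ∈ V
    have e : (fun u v => (x + y) u * h v)
        = (fun u v => x u * h v) + fun u v => y u * h v := by
      funext u v; simp [add_mul]
    rw [e]; exact V.add_mem ihx ihy
  · intro r x _ ih
    show (fun u v => (r • x) u * h v) ∈ V
    have e : (fun u v => (r • x) u * h v) = r • fun u v => x u * h v := by
      funext u v; simp; ring
    rw [e]; exact V.smul_mem r ih

lemma key_mem (g : ℝ → ℝ) (β : Fin 5 → ℝ) (h : ∀ t, g t = ∑ a, β a * mA a t) :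
    g ∈ Vu := by
  refine (Submodule.mem_span_range_iff_exists_fun ℝ).mpr ⟨β, ?_⟩
  funext t
  simpa [Finset.sum_apply] using (h t).symm

lemma cos_half (t : ℝ) : Real.cos t = Real.cos (t/2) ^ 2 - Real.sin (t/2) ^ 2 := by
  have := Real.cos_two_mul' (t/2)
  rw [show 2 * (t/2) = t by ring] at this
  linarith

lemma sin_half (t : ℝ) : Real.sin t = 2 * Real.sin (t/2) * Real.cos (t/2) := by
  have := Real.sin_two_mul (t/2)
  rw [show 2 * (t/2) = t by ring] at this
  linarith

lemma fv0 : ((0 : Fin 5) : ℕ) = 0 := rfl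
lemma fv1 : ((1 : Fin 5) : ℕ) = 1 := rfl
lemma fv2 : ((2 : Fin 5) : ℕ) = 2 := rfl
lemma fv3 : ((3 : Fin 5) : ℕ) = 3 := rfl
lemma fv4 : ((4 : Fin 5) : ℕ) = 4 := rfl

lemma cosn_mem (n : ℤ) (hn : n ∈ Finset.Icc (-2 : ℤ) 2) :
    (fun t => Real.cos ((n : ℝ) * t)) ∈ Vu := by
  obtain ⟨h1, h2⟩ := Finset.mem_Icc.mp hn
  interval_cases n
  · refine key_mem _ ![1, 0, -6, 0, 1] fun t => ?_
    have hc := cos_half t; have hs := sin_half t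
    have h3 := Real.cos_two_mul' t
    rw [show ((-2 : ℤ) : ℝ) * t = -(2 * t) by push_cast; ring, Real.cos_neg]
    simp only [Fin.sum_univ_five, mA, fv0, fv1, fv2, fv3, fv4, Matrix.cons_val]
    norm_num
    linear_combination h3 + (Real.cos t + Real.cos (t/2)^2 - Real.sin (t/2)^2) * hc
      - (Real.sin t + 2*Real.sin (t/2)*Real.cos (t/2)) * hs
  · refine key_mem _ ![-1, 0, 0, 0, 1] fun t => ?_
    have hc := cos_half t; have p := Real.sin_sq_add_cos_sq (t/2)
    rw [show ((-1 : ℤ) : ℝ) * t = -t by push_cast; ring, Real.cos_neg]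
    simp only [Fin.sum_univ_five, mA, fv0, fv1, fv2, fv3, fv4, Matrix.cons_val]
    norm_num
    linear_combination hc + (Real.sin (t/2)^2 - Real.cos (t/2)^2) * p
  · refine key_mem _ ![1, 0, 2, 0, 1] fun t => ?_
    have p := Real.sin_sq_add_cos_sq (t/2)
    simp only [Fin.sum_univ_five, mA, fv0, fv1, fv2, fv3, fv4, Matrix.cons_val]
    norm_num
    linear_combination (-(1 + Real.sin (t/2)^2 + Real.cos (t/2)^2)) * p
  · refine key_mem _ ![-1, 0, 0, 0, 1] fun t => ?_
    have hc := cos_half t; have p := Real.sin_sq_add_cos_sq (t/2)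
    rw [show ((1 : ℤ) : ℝ) * t = t by push_cast; ring]
    simp only [Fin.sum_univ_five, mA, fv0, fv1, fv2, fv3, fv4, Matrix.cons_val]
    norm_num
    linear_combination hc + (Real.sin (t/2)^2 - Real.cos (t/2)^2) * p
  · refine key_mem _ ![1, 0, -6, 0, 1] fun t => ?_
    have hc := cos_half t; have hs := sin_half t
    have h3 := Real.cos_two_mul' t
    rw [show ((2 : ℤ) : ℝ) * t = 2 * t by push_cast; ring]
    simp only [Fin.sum_univ_five, mA, fv0, fv1, fv2, fv3, fv4, Matrix.cons_val]
    norm_num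
    linear_combination h3 + (Real.cos t + Real.cos (t/2)^2 - Real.sin (t/2)^2) * hc
      - (Real.sin t + 2*Real.sin (t/2)*Real.cos (t/2)) * hs

lemma sinn_mem (n : ℤ) (hn : n ∈ Finset.Icc (-2 : ℤ) 2) :
    (fun t => Real.sin ((n : ℝ) * t)) ∈ Vu := by
  obtain ⟨h1, h2⟩ := Finset.mem_Icc.mp hn
  interval_cases n
  · refine key_mem _ ![0, 4, 0, -4, 0] fun t => ?_
    have hc := cos_half t; have hs := sin_half t
    have h3 := Real.sin_two_mul t
    rw [show ((-2 : ℤ) : ℝ) * t = -(2 * t) by push_cast; ring, Real.sin_neg]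
    simp only [Fin.sum_univ_five, mA, fv0, fv1, fv2, fv3, fv4, Matrix.cons_val]
    norm_num
    linear_combination -h3 - 2*Real.sin t*hc
      - 2*(Real.cos (t/2)^2 - Real.sin (t/2)^2)*hs
  · refine key_mem _ ![0, -2, 0, -2, 0] fun t => ?_
    have hs := sin_half t; have p := Real.sin_sq_add_cos_sq (t/2)
    rw [show ((-1 : ℤ) : ℝ) * t = -t by push_cast; ring, Real.sin_neg]
    simp only [Fin.sum_univ_five, mA, fv0, fv1, fv2, fv3, fv4, Matrix.cons_val]
    norm_num
    linear_combination -hs + 2*Real.sin (t/2)*Real.cos (t/2)*p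
  · refine key_mem _ ![0, 0, 0, 0, 0] fun t => ?_
    simp only [Fin.sum_univ_five, mA, fv0, fv1, fv2, fv3, fv4, Matrix.cons_val]
    norm_num
  · refine key_mem _ ![0, 2, 0, 2, 0] fun t => ?_
    have hs := sin_half t; have p := Real.sin_sq_add_cos_sq (t/2)
    rw [show ((1 : ℤ) : ℝ) * t = t by push_cast; ring]
    simp only [Fin.sum_univ_five, mA, fv0, fv1, fv2, fv3, fv4, Matrix.cons_val]
    norm_num
    linear_combination hs - 2*Real.sin (t/2)*Real.cos (t/2)*p
  · refine key_mem _ ![0, -4, 0, 4, 0] fun t => ?_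
    have hc := cos_half t; have hs := sin_half t
    have h3 := Real.sin_two_mul t
    rw [show ((2 : ℤ) : ℝ) * t = 2 * t by push_cast; ring]
    simp only [Fin.sum_univ_five, mA, fv0, fv1, fv2, fv3, fv4, Matrix.cons_val]
    norm_num
    linear_combination h3 + 2*Real.sin t*hc
      + 2*(Real.cos (t/2)^2 - Real.sin (t/2)^2)*hs

lemma cosnm_mem (n m : ℤ) (hn : n ∈ Finset.Icc (-2 : ℤ) 2)
    (hm : m ∈ Finset.Icc (-2 : ℤ) 2) :
    (fun u v => Real.cos ((n : ℝ) * u + (m : ℝ) * v)) ∈ V := by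
  have e : (fun u v => Real.cos ((n : ℝ) * u + (m : ℝ) * v))
      = (fun u v => Real.cos ((n : ℝ) * u) * Real.cos ((m : ℝ) * v))
        - fun u v => Real.sin ((n : ℝ) * u) * Real.sin ((m : ℝ) * v) := by
    funext u v; simp [Real.cos_add]
  rw [e]
  exact V.sub_mem (mul_mem_V (cosn_mem n hn) (cosn_mem m hm))
    (mul_mem_V (sinn_mem n hn) (sinn_mem m hm))

lemma sinnm_mem (n m : ℤ) (hn : n ∈ Finset.Icc (-2 : ℤ) 2)
    (hm : m ∈ Finset.Icc (-2 : ℤ) 2) :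
    (fun u v => Real.sin ((n : ℝ) * u + (m : ℝ) * v)) ∈ V := by
  have e : (fun u v => Real.sin ((n : ℝ) * u + (m : ℝ) * v))
      = (fun u v => Real.sin ((n : ℝ) * u) * Real.cos ((m : ℝ) * v))
        + fun u v => Real.cos ((n : ℝ) * u) * Real.sin ((m : ℝ) * v) := by
    funext u v; simp [Real.sin_add]
  rw [e]
  exact V.add_mem (mul_mem_V (sinn_mem n hn) (cosn_mem m hm))
    (mul_mem_V (cosn_mem n hn) (sinn_mem m hm))

/-- Every real trigonometric polynomial of bidegree at most (2,2) is a homogeneous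
quartic expression in the functions `x₀, x₁, x₂, x₃` parametrizing the hyperboloid. -/
theorem stmt_4 (f : ℝ → ℝ → ℝ) (c : ℤ × ℤ → ℂ)
    (hc : ∀ n m : ℤ, c (-n, -m) = starRingEnd ℂ (c (n, m)))
    (hf : ∀ u v : ℝ, (f u v : ℂ) =
      ∑ n ∈ Finset.Icc (-2 : ℤ) 2, ∑ m ∈ Finset.Icc (-2 : ℤ) 2,
        c (n, m) * Complex.exp (Complex.I * ((n : ℂ) * u + (m : ℂ) * v))) :
    ∃ α : Fin 4 → Fin 4 → Fin 4 → Fin 4 → ℝ, ∀ u v : ℝ,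
      f u v = ∑ i : Fin 4, ∑ j : Fin 4, ∑ k : Fin 4, ∑ l : Fin 4,
        α i j k l * hypX u v i * hypX u v j * hypX u v k * hypX u v l := by
  have hre : ∀ u v : ℝ, f u v =
      ∑ n ∈ Finset.Icc (-2 : ℤ) 2, ∑ m ∈ Finset.Icc (-2 : ℤ) 2,
        ((c (n, m)).re * Real.cos ((n : ℝ) * u + (m : ℝ) * v)
          - (c (n, m)).im * Real.sin ((n : ℝ) * u + (m : ℝ) * v)) := by
    intro u v
    have h := congrArg Complex.re (hf u v)
    rw [Complex.ofReal_re] at h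
    rw [h, Complex.re_sum]
    refine Finset.sum_congr rfl fun n _ => ?_
    rw [Complex.re_sum]
    refine Finset.sum_congr rfl fun m _ => ?_
    have harg : Complex.I * ((n : ℂ) * u + (m : ℂ) * v)
        = (((n : ℝ) * u + (m : ℝ) * v : ℝ) : ℂ) * Complex.I := by
      push_cast; ring
    rw [harg, Complex.exp_mul_I, ← Complex.ofReal_cos, ← Complex.ofReal_sin]
    simp only [Complex.mul_re, Complex.add_re, Complex.add_im, Complex.mul_im,
      Complex.ofReal_re, Complex.ofReal_im, Complex.I_re, Complex.I_im]
    ring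
  have hV : f ∈ V := by
    have hfe : f = ∑ n ∈ Finset.Icc (-2 : ℤ) 2, ∑ m ∈ Finset.Icc (-2 : ℤ) 2,
        ((c (n, m)).re • (fun u v => Real.cos ((n : ℝ) * u + (m : ℝ) * v))
          + (-(c (n, m)).im) • fun u v => Real.sin ((n : ℝ) * u + (m : ℝ) * v)) := by
      funext u v
      rw [hre u v]
      simp only [Finset.sum_apply, Pi.add_apply, Pi.smul_apply, smul_eq_mul]
      exact Finset.sum_congr rfl fun n _ => Finset.sum_congr rfl fun m _ => by ring
    rw [hfe]
    refine Submodule.sum_mem V fun n hn => Submodule.sum_mem V fun m hm => ?_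
    exact V.add_mem (V.smul_mem _ (cosnm_mem n m hn hm))
      (V.smul_mem _ (sinnm_mem n m hn hm))
  obtain ⟨γ, hγ⟩ := (Submodule.mem_span_range_iff_exists_fun ℝ).mp hV
  refine ⟨fun i j k l => γ (i, j, k, l), fun u v => ?_⟩
  have h := congrFun (congrFun hγ u) v
  rw [← h]
  simp only [Finset.sum_apply, Pi.smul_apply, smul_eq_mul, g4]
  rw [Fintype.sum_prod_type]
  refine Finset.sum_congr rfl fun i _ => ?_
  rw [Fintype.sum_prod_type]
  refine Finset.sum_congr rfl fun j _ => ?_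
  rw [Fintype.sum_prod_type]
  refine Finset.sum_congr rfl fun k _ => ?_
  refine Finset.sum_congr rfl fun l _ => ?_
  ring
end

section
/- Let f(u,v) = cos(2u)(α₁₁ cos 2v + α₁₂ sin 2v) + sin(2u)(α₂₁ cos 2v + α₂₂ sin 2v) with real constants α_{ij} such that the pair (α₁₁α₁₂+α₂₁α₂₂, α₂₂²−α₂₁²+α₁₂²−α₁₁²) is nonzero and the configuration is generic (both equations define nonempty transverse curves). Then the system f_uuu + f_u = 0 and f_vvv + f_v = 0 has at least 32 distinct solutions (u,v) in [0,2π) × [0,2π). -/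
open Real



noncomputable def shp (a b : ℝ) : ℝ → ℝ := fun t => Real.cos (2*t) * a + Real.sin (2*t) * b

lemma shp_hasDeriv (a b u : ℝ) :
    HasDerivAt (shp a b) (Real.cos (2*u) * (2*b) + Real.sin (2*u) * (-2*a)) u := by
  have h2 : HasDerivAt (fun t : ℝ => 2*t) 2 u := by
    simpa using (hasDerivAt_id u).const_mul 2
  have hc : HasDerivAt (fun t => Real.cos (2*t) * a) (-Real.sin (2*u) * 2 * a) u :=
    (h2.cos).mul_const a
  have hs : HasDerivAt (fun t => Real.sin (2*t) * b) (Real.cos (2*u) * 2 * b) u :=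
    (h2.sin).mul_const b
  have this : HasDerivAt (shp a b) (-Real.sin (2*u) * 2 * a + Real.cos (2*u) * 2 * b) u :=
    hc.add hs
  convert this using 1
  ring

lemma shp_deriv (a b : ℝ) : deriv (shp a b) = shp (2*b) (-2*a) := by
  funext u
  rw [(shp_hasDeriv a b u).deriv]
  simp only [shp]

lemma shp_iter3 (a b u : ℝ) :
    iteratedDeriv 3 (shp a b) u + deriv (shp a b) u
      = 6 * (Real.sin (2*u) * a - Real.cos (2*u) * b) := by
  have h3 : iteratedDeriv 3 (shp a b) = deriv (deriv (deriv (shp a b))) := by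
    rw [show (3:ℕ) = 2+1 from rfl, iteratedDeriv_succ,
        show (2:ℕ) = 1+1 from rfl, iteratedDeriv_succ, iteratedDeriv_one]
  rw [h3]
  simp only [shp_deriv, shp]
  ring

lemma shift_all {g : ℝ → Prop} {T : ℝ}
    (hp : ∀ u, g u → g (u+T)) (hm : ∀ u, g u → g (u-T)) {u : ℝ} (hu : g u) :
    ∀ n : ℤ, g (u + n*T) := by
  intro n
  induction n using Int.induction_on with
  | zero => simpa using hu
  | succ k ih =>
      push_cast at ih ⊢
      have h : u + ((k:ℝ)+1)*T = (u + (k:ℝ)*T) + T := by ring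
      rw [h]; exact hp _ ih
  | pred k ih =>
      push_cast at ih ⊢
      have h : u + (-(k:ℝ)-1)*T = (u + (-(k:ℝ))*T) - T := by ring
      rw [h]; exact hm _ ih

lemma reduce_mem {g : ℝ → Prop} {T : ℝ} (hT : 0 < T)
    (hp : ∀ u, g u → g (u+T)) (hm : ∀ u, g u → g (u-T)) {u : ℝ} (hu : g u) :
    ∃ w, w ∈ Set.Ico (0:ℝ) T ∧ g w := by
  refine ⟨u + (-⌊u/T⌋ : ℤ)*T, ⟨?_, ?_⟩, shift_all hp hm hu _⟩
  · have h1 : (⌊u/T⌋ : ℝ) ≤ u/T := Int.floor_le _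
    rw [le_div_iff₀ hT] at h1
    push_cast
    linarith
  · have h2 : u/T < ⌊u/T⌋ + 1 := Int.lt_floor_add_one _
    rw [div_lt_iff₀ hT] at h2
    push_cast
    linarith

/-- find an angle with given cos/sin on the unit circle -/
lemma exists_angle (x y : ℝ) (h : x^2 + y^2 = 1) :
    ∃ θ : ℝ, Real.cos θ = x ∧ Real.sin θ = y := by
  have hz : (⟨x, y⟩ : ℂ) ≠ 0 := by
    intro h0
    rw [Complex.ext_iff] at h0
    simp at h0
    rw [h0.1, h0.2] at h
    norm_num at h
  have habs : ‖(⟨x, y⟩ : ℂ)‖ = 1 := by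
    rw [Complex.norm_def, Complex.normSq_mk]
    rw [show x*x + y*y = 1 by nlinarith]
    exact Real.sqrt_one
  refine ⟨Complex.arg ⟨x, y⟩, ?_, ?_⟩
  · rw [Complex.cos_arg hz, habs]; simp
  · rw [Complex.sin_arg, habs]; simp

def Sat (α₁₁ α₁₂ α₂₁ α₂₂ u v : ℝ) : Prop :=
  Real.sin (2*u) * (α₁₁*Real.cos (2*v)+α₁₂*Real.sin (2*v))
    - Real.cos (2*u) * (α₂₁*Real.cos (2*v)+α₂₂*Real.sin (2*v)) = 0 ∧
  Real.sin (2*v) * (α₁₁*Real.cos (2*u)+α₂₁*Real.sin (2*u))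
    - Real.cos (2*v) * (α₁₂*Real.cos (2*u)+α₂₂*Real.sin (2*u)) = 0

def Rcond (α₁₁ α₁₂ α₂₁ α₂₂ v : ℝ) : Prop :=
  (α₁₁*α₁₂+α₂₁*α₂₂) * Real.cos (4*v)
    + ((α₂₂^2-α₂₁^2+α₁₂^2-α₁₁^2)/2) * Real.sin (4*v) = 0

lemma Sat_shift_p (α₁₁ α₁₂ α₂₁ α₂₂ u v : ℝ) (h : Sat α₁₁ α₁₂ α₂₁ α₂₂ u v) :
    Sat α₁₁ α₁₂ α₂₁ α₂₂ (u + π/2) v := by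
  obtain ⟨h1, h2⟩ := h
  have e : 2*(u + π/2) = 2*u + π := by ring
  constructor <;> rw [e, Real.cos_add_pi, Real.sin_add_pi] <;> [linarith; nlinarith [h2]]

lemma Sat_shift_m (α₁₁ α₁₂ α₂₁ α₂₂ u v : ℝ) (h : Sat α₁₁ α₁₂ α₂₁ α₂₂ u v) :
    Sat α₁₁ α₁₂ α₂₁ α₂₂ (u - π/2) v := by
  obtain ⟨h1, h2⟩ := h
  have e : 2*(u - π/2) = 2*u - π := by ring
  constructor <;> rw [e, Real.cos_sub_pi, Real.sin_sub_pi] <;> [linarith; nlinarith [h2]]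

lemma Rcond_shift_p (α₁₁ α₁₂ α₂₁ α₂₂ v : ℝ) (h : Rcond α₁₁ α₁₂ α₂₁ α₂₂ v) :
    Rcond α₁₁ α₁₂ α₂₁ α₂₂ (v + π/4) := by
  unfold Rcond at *
  have e : 4*(v + π/4) = 4*v + π := by ring
  rw [e, Real.cos_add_pi, Real.sin_add_pi]
  linarith

lemma Rcond_shift_m (α₁₁ α₁₂ α₂₁ α₂₂ v : ℝ) (h : Rcond α₁₁ α₁₂ α₂₁ α₂₂ v) :
    Rcond α₁₁ α₁₂ α₂₁ α₂₂ (v - π/4) := by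
  unfold Rcond at *
  have e : 4*(v - π/4) = 4*v - π := by ring
  rw [e, Real.cos_sub_pi, Real.sin_sub_pi]
  linarith

lemma exists_v (α₁₁ α₁₂ α₂₁ α₂₂ : ℝ) (hgen : α₁₁ * α₁₂ + α₂₁ * α₂₂ ≠ 0) :
    ∃ v, v ∈ Set.Ico (0:ℝ) (π/4) ∧ Rcond α₁₁ α₁₂ α₂₁ α₂₂ v := by
  set P := α₁₁ * α₁₂ + α₂₁ * α₂₂ with hP
  set Q := (α₂₂^2-α₂₁^2+α₁₂^2-α₁₁^2)/2 with hQ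
  have hr : 0 < Real.sqrt (P^2 + Q^2) := by
    apply Real.sqrt_pos.2
    have : 0 < P^2 := by positivity
    nlinarith [sq_nonneg Q]
  set r := Real.sqrt (P^2 + Q^2) with hrdef
  have hr2 : r^2 = P^2 + Q^2 := Real.sq_sqrt (by positivity)
  obtain ⟨θ, hcθ, hsθ⟩ := exists_angle (-Q/r) (P/r) (by
    field_simp
    nlinarith [hr2])
  -- θ/4 satisfies Rcond
  have hbase : Rcond α₁₁ α₁₂ α₂₁ α₂₂ (θ/4) := by
    unfold Rcond
    rw [show 4*(θ/4) = θ by ring, hcθ, hsθ]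
    field_simp
    ring
  obtain ⟨w, hw, hcond⟩ := reduce_mem (g := fun v => Rcond α₁₁ α₁₂ α₂₁ α₂₂ v)
    (T := π/4) (by positivity)
    (fun u h => Rcond_shift_p _ _ _ _ u h) (fun u h => Rcond_shift_m _ _ _ _ u h) hbase
  exact ⟨w, hw, hcond⟩

lemma exists_u_core (α₁₁ α₁₂ α₂₁ α₂₂ v x y : ℝ) (hxy : x^2 + y^2 = 1)
    (l1 : y * (α₁₁*Real.cos (2*v)+α₁₂*Real.sin (2*v))
        - x * (α₂₁*Real.cos (2*v)+α₂₂*Real.sin (2*v)) = 0)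
    (l2 : x * (Real.sin (2*v)*α₁₁ - Real.cos (2*v)*α₁₂)
        + y * (Real.sin (2*v)*α₂₁ - Real.cos (2*v)*α₂₂) = 0) :
    ∃ u, u ∈ Set.Ico (0:ℝ) (π/2) ∧ Sat α₁₁ α₁₂ α₂₁ α₂₂ u v := by
  obtain ⟨θ, hcθ, hsθ⟩ := exists_angle x y hxy
  have hbase : Sat α₁₁ α₁₂ α₂₁ α₂₂ (θ/2) v := by
    unfold Sat
    rw [show 2*(θ/2) = θ by ring, hcθ, hsθ]
    constructor
    · linarith
    · nlinarith [l2]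
  obtain ⟨w, hw, hcond⟩ := reduce_mem (g := fun u => Sat α₁₁ α₁₂ α₂₁ α₂₂ u v)
    (T := π/2) (by positivity)
    (fun u h => Sat_shift_p _ _ _ _ u v h) (fun u h => Sat_shift_m _ _ _ _ u v h) hbase
  exact ⟨w, hw, hcond⟩

lemma exists_u (α₁₁ α₁₂ α₂₁ α₂₂ : ℝ) (hgen : α₁₁ * α₁₂ + α₂₁ * α₂₂ ≠ 0)
    (v : ℝ) (hv : Rcond α₁₁ α₁₂ α₂₁ α₂₂ v) :
    ∃ u, u ∈ Set.Ico (0:ℝ) (π/2) ∧ Sat α₁₁ α₁₂ α₂₁ α₂₂ u v := by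
  obtain ⟨c, hc⟩ : ∃ c, Real.cos (2*v) = c := ⟨_, rfl⟩
  obtain ⟨s, hs⟩ : ∃ s, Real.sin (2*v) = s := ⟨_, rfl⟩
  have pyth : s^2 + c^2 = 1 := by rw [← hc, ← hs]; exact Real.sin_sq_add_cos_sq (2*v)
  have hv' : (α₁₁*α₁₂+α₂₁*α₂₂) * (c^2 - s^2)
      + ((α₂₂^2-α₂₁^2+α₁₂^2-α₁₁^2)) * (s*c) = 0 := by
    unfold Rcond at hv
    rw [show (4:ℝ)*v = 2*(2*v) by ring, Real.cos_two_mul, Real.sin_two_mul, hc, hs] at hv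
    linear_combination hv - (α₁₁*α₁₂+α₂₁*α₂₂)*pyth
  have key : (α₂₁*c+α₂₂*s)*(s*α₂₁-c*α₂₂) + (α₁₁*c+α₁₂*s)*(s*α₁₁-c*α₁₂) = 0 := by
    linear_combination -hv'
  by_cases hEF : s*α₁₁-c*α₁₂ = 0 ∧ s*α₂₁-c*α₂₂ = 0
  · have hAB : ¬ (α₁₁*c+α₁₂*s = 0 ∧ α₂₁*c+α₂₂*s = 0) := by
      rintro ⟨hA0, hB0⟩
      have e11 : α₁₁ = 0 := by linear_combination c*hA0 + s*hEF.1 - α₁₁*pyth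
      have e12 : α₁₂ = 0 := by linear_combination s*hA0 - c*hEF.1 - α₁₂*pyth
      have e21 : α₂₁ = 0 := by linear_combination c*hB0 + s*hEF.2 - α₂₁*pyth
      have e22 : α₂₂ = 0 := by linear_combination s*hB0 - c*hEF.2 - α₂₂*pyth
      apply hgen; rw [e11, e12, e21, e22]; ring
    have hpos : 0 < (α₁₁*c+α₁₂*s)^2 + (α₂₁*c+α₂₂*s)^2 := by
      rcases not_and_or.1 hAB with h | h
      · have := mul_self_pos.mpr h
        nlinarith [sq_nonneg (α₂₁*c+α₂₂*s)]
      · have := mul_self_pos.mpr h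
        nlinarith [sq_nonneg (α₁₁*c+α₁₂*s)]
    have hr : 0 < Real.sqrt ((α₁₁*c+α₁₂*s)^2 + (α₂₁*c+α₂₂*s)^2) := Real.sqrt_pos.2 hpos
    obtain ⟨r, hrdef⟩ : ∃ r, Real.sqrt ((α₁₁*c+α₁₂*s)^2 + (α₂₁*c+α₂₂*s)^2) = r := ⟨_, rfl⟩
    rw [hrdef] at hr
    have hr0 : r ≠ 0 := ne_of_gt hr
    have hr2 : r^2 = (α₁₁*c+α₁₂*s)^2 + (α₂₁*c+α₂₂*s)^2 := by
      rw [← hrdef]; exact Real.sq_sqrt (le_of_lt hpos)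
    apply exists_u_core α₁₁ α₁₂ α₂₁ α₂₂ v ((α₁₁*c+α₁₂*s)/r) ((α₂₁*c+α₂₂*s)/r)
    · field_simp
      linear_combination -hr2
    · rw [hc, hs]; field_simp; ring
    · rw [hc, hs]
      field_simp
      linear_combination ((α₁₁*c+α₁₂*s))*hEF.1 + ((α₂₁*c+α₂₂*s))*hEF.2
  · have hpos : 0 < (s*α₁₁-c*α₁₂)^2 + (s*α₂₁-c*α₂₂)^2 := by
      rcases not_and_or.1 hEF with h | h
      · have := mul_self_pos.mpr h
        nlinarith [sq_nonneg (s*α₂₁-c*α₂₂)]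
      · have := mul_self_pos.mpr h
        nlinarith [sq_nonneg (s*α₁₁-c*α₁₂)]
    have hr : 0 < Real.sqrt ((s*α₁₁-c*α₁₂)^2 + (s*α₂₁-c*α₂₂)^2) := Real.sqrt_pos.2 hpos
    obtain ⟨r, hrdef⟩ : ∃ r, Real.sqrt ((s*α₁₁-c*α₁₂)^2 + (s*α₂₁-c*α₂₂)^2) = r := ⟨_, rfl⟩
    rw [hrdef] at hr
    have hr0 : r ≠ 0 := ne_of_gt hr
    have hr2 : r^2 = (s*α₁₁-c*α₁₂)^2 + (s*α₂₁-c*α₂₂)^2 := by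
      rw [← hrdef]; exact Real.sq_sqrt (le_of_lt hpos)
    apply exists_u_core α₁₁ α₁₂ α₂₁ α₂₂ v (-(s*α₂₁-c*α₂₂)/r) ((s*α₁₁-c*α₁₂)/r)
    · field_simp
      linear_combination -hr2
    · rw [hc, hs]
      field_simp
      linear_combination key
    · rw [hc, hs]; field_simp; ring

/-- For a generic homogeneous second harmonic `f`, the system
`f_uuu + f_u = 0`, `f_vvv + f_v = 0` has at least 32 distinct solutions on the torus
`[0,2π) × [0,2π)`.  Genericity is the condition `α₁₁α₁₂ + α₂₁α₂₂ ≠ 0` making the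
associated quadratic equation non-degenerate (in particular the pair
`(α₁₁α₁₂+α₂₁α₂₂, α₂₂²−α₂₁²+α₁₂²−α₁₁²)` is nonzero and the two solution curves are
nonempty and transverse). -/
theorem stmt_8 (α₁₁ α₁₂ α₂₁ α₂₂ : ℝ)
    (f : ℝ → ℝ → ℝ)
    (hf : ∀ u v, f u v = Real.cos (2 * u) * (α₁₁ * Real.cos (2 * v) + α₁₂ * Real.sin (2 * v)) +
      Real.sin (2 * u) * (α₂₁ * Real.cos (2 * v) + α₂₂ * Real.sin (2 * v)))
    (hpair : (α₁₁ * α₁₂ + α₂₁ * α₂₂, α₂₂ ^ 2 - α₂₁ ^ 2 + α₁₂ ^ 2 - α₁₁ ^ 2) ≠ (0, 0))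
    (hgen : α₁₁ * α₁₂ + α₂₁ * α₂₂ ≠ 0) :
    ∃ S : Finset (ℝ × ℝ), 32 ≤ S.card ∧ ∀ p ∈ S,
      p.1 ∈ Set.Ico (0 : ℝ) (2 * π) ∧ p.2 ∈ Set.Ico (0 : ℝ) (2 * π) ∧
      iteratedDeriv 3 (fun t => f t p.2) p.1 + deriv (fun t => f t p.2) p.1 = 0 ∧
      iteratedDeriv 3 (fun t => f p.1 t) p.2 + deriv (fun t => f p.1 t) p.2 = 0 := by
  obtain ⟨v₀, hv₀mem, hv₀⟩ := exists_v α₁₁ α₁₂ α₂₁ α₂₂ hgen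
  have hπ : (0:ℝ) < π := Real.pi_pos
  have hRk : ∀ k : ℕ, Rcond α₁₁ α₁₂ α₂₁ α₂₂ (v₀ + k*(π/4)) := by
    intro k
    have := shift_all (g := Rcond α₁₁ α₁₂ α₂₁ α₂₂) (T := π/4)
      (fun u h => Rcond_shift_p _ _ _ _ u h) (fun u h => Rcond_shift_m _ _ _ _ u h)
      hv₀ (k : ℤ)
    simpa using this
  have hU : ∀ k : ℕ, ∃ u, u ∈ Set.Ico (0:ℝ) (π/2) ∧ Sat α₁₁ α₁₂ α₂₁ α₂₂ u (v₀ + k*(π/4)) :=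
    fun k => exists_u α₁₁ α₁₂ α₂₁ α₂₂ hgen _ (hRk k)
  choose uu huuIco huuSat using hU
  have hSatjk : ∀ j k : ℕ, Sat α₁₁ α₁₂ α₂₁ α₂₂ (uu k + j*(π/2)) (v₀ + k*(π/4)) := by
    intro j k
    have := shift_all (g := fun u => Sat α₁₁ α₁₂ α₂₁ α₂₂ u (v₀ + k*(π/4))) (T := π/2)
      (fun u h => Sat_shift_p _ _ _ _ u _ h) (fun u h => Sat_shift_m _ _ _ _ u _ h)
      (huuSat k) (j : ℤ)
    simpa using this
  refine ⟨Finset.image (fun p : ℕ × ℕ => ((uu p.2 + p.1*(π/2), v₀ + p.2*(π/4)) : ℝ × ℝ))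
    (Finset.range 4 ×ˢ Finset.range 8), ?_, ?_⟩
  · rw [Finset.card_image_of_injOn]
    · simp
    · intro p hp q hq h
      have h2 : v₀ + (p.2:ℝ)*(π/4) = v₀ + (q.2:ℝ)*(π/4) := congrArg Prod.snd h
      have hk : (p.2:ℝ) = (q.2:ℝ) := by
        have h4 : (0:ℝ) < π/4 := by positivity
        have : (p.2:ℝ)*(π/4) = (q.2:ℝ)*(π/4) := by linarith
        exact mul_right_cancel₀ (ne_of_gt h4) this
      have hk' : p.2 = q.2 := Nat.cast_injective hk
      have h1 : uu p.2 + (p.1:ℝ)*(π/2) = uu q.2 + (q.1:ℝ)*(π/2) := congrArg Prod.fst h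
      rw [hk'] at h1
      have hj : (p.1:ℝ) = (q.1:ℝ) := by
        have h4 : (0:ℝ) < π/2 := by positivity
        have : (p.1:ℝ)*(π/2) = (q.1:ℝ)*(π/2) := by linarith
        exact mul_right_cancel₀ (ne_of_gt h4) this
      exact Prod.ext (Nat.cast_injective hj) hk'
  · intro p hp
    obtain ⟨q, hq, rfl⟩ := Finset.mem_image.1 hp
    rw [Finset.mem_product, Finset.mem_range, Finset.mem_range] at hq
    obtain ⟨hq1, hq2⟩ := hq
    obtain ⟨hu0, hu1⟩ := huuIco q.2
    obtain ⟨hv0lo, hv0hi⟩ := hv₀mem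
    have hj3 : (q.1:ℝ) ≤ 3 := by exact_mod_cast Nat.lt_succ_iff.1 hq1
    have hk7 : (q.2:ℝ) ≤ 7 := by exact_mod_cast Nat.lt_succ_iff.1 hq2
    have hjpos : (0:ℝ) ≤ (q.1:ℝ) := Nat.cast_nonneg _
    have hkpos : (0:ℝ) ≤ (q.2:ℝ) := Nat.cast_nonneg _
    obtain ⟨hS1, hS2⟩ := hSatjk q.1 q.2
    refine ⟨⟨?_, ?_⟩, ⟨?_, ?_⟩, ?_, ?_⟩
    · simp only
      nlinarith
    · simp only
      nlinarith
    · simp only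
      nlinarith
    · simp only
      nlinarith
    · have hfun1 : (fun t => f t (v₀ + q.2*(π/4)))
        = shp (α₁₁ * Real.cos (2*(v₀ + q.2*(π/4))) + α₁₂ * Real.sin (2*(v₀ + q.2*(π/4))))
              (α₂₁ * Real.cos (2*(v₀ + q.2*(π/4))) + α₂₂ * Real.sin (2*(v₀ + q.2*(π/4)))) := by
        funext t
        rw [hf]
        rfl
      simp only
      rw [hfun1, shp_iter3]
      rw [hS1]
      ring
    · have hfun2 : (fun t => f (uu q.2 + q.1*(π/2)) t)
        = shp (α₁₁ * Real.cos (2*(uu q.2 + q.1*(π/2))) + α₂₁ * Real.sin (2*(uu q.2 + q.1*(π/2))))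
              (α₁₂ * Real.cos (2*(uu q.2 + q.1*(π/2))) + α₂₂ * Real.sin (2*(uu q.2 + q.1*(π/2)))) := by
        funext t
        rw [hf]
        simp only [shp]
        ring
      simp only
      rw [hfun2, shp_iter3]
      have hS2' : Real.sin (2*(v₀ + q.2*(π/4)))
            * (α₁₁ * Real.cos (2*(uu q.2 + q.1*(π/2))) + α₂₁ * Real.sin (2*(uu q.2 + q.1*(π/2))))
          - Real.cos (2*(v₀ + q.2*(π/4)))
            * (α₁₂ * Real.cos (2*(uu q.2 + q.1*(π/2))) + α₂₂ * Real.sin (2*(uu q.2 + q.1*(π/2)))) = 0 := hS2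
      rw [hS2']
      ring
end

section
/- If the coordinates of a canonical lift X(u,v) ∈ ℝ⁴ (with det(X, X_u, X_v, X_uv) = 1) satisfy X_uu + a X_v + α X = 0 and X_vv + b X_u + β X = 0, then the coefficients necessarily satisfy the integrability condition a·b_v + 2a_v·b + b_uu + 2β_u = 0 (and symmetrically b·a_u + 2b_u·a + a_vv + 2α_v = 0). -/
section Helpers

variable {E : Type*} [NormedAddCommGroup E] [NormedSpace ℝ E]

noncomputable def pdA (F : ℝ → ℝ → E) : ℝ → ℝ → E := fun u v => deriv (fun t => F t v) u
noncomputable def pdB (F : ℝ → ℝ → E) : ℝ → ℝ → E := fun u v => deriv (fun t => F u t) v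

def Sm (F : ℝ → ℝ → E) : Prop := ContDiff ℝ (⊤ : ℕ∞) (fun p : ℝ × ℝ => F p.1 p.2)

variable {F : ℝ → ℝ → E}

theorem hdA (hF : Sm F) (u v : ℝ) :
    HasDerivAt (fun t => F t v) (fderiv ℝ (fun p : ℝ × ℝ => F p.1 p.2) (u, v) (1, 0)) u := by
  have := ((hF.differentiable (by simp) (u, v)).hasFDerivAt).comp_hasDerivAt u
    (HasDerivAt.prodMk (hasDerivAt_id u) (hasDerivAt_const u v))
  exact this

theorem hdB (hF : Sm F) (u v : ℝ) :
    HasDerivAt (fun t => F u t) (fderiv ℝ (fun p : ℝ × ℝ => F p.1 p.2) (u, v) (0, 1)) v :=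
  ((hF.differentiable (by simp) (u, v)).hasFDerivAt).comp_hasDerivAt v
    (HasDerivAt.prodMk (hasDerivAt_const v u) (hasDerivAt_id v))

theorem pdA_eq (hF : Sm F) (u v : ℝ) :
    pdA F u v = fderiv ℝ (fun p : ℝ × ℝ => F p.1 p.2) (u, v) (1, 0) :=
  (hdA hF u v).deriv

theorem pdB_eq (hF : Sm F) (u v : ℝ) :
    pdB F u v = fderiv ℝ (fun p : ℝ × ℝ => F p.1 p.2) (u, v) (0, 1) :=
  (hdB hF u v).deriv

theorem hdA' (hF : Sm F) (u v : ℝ) : HasDerivAt (fun t => F t v) (pdA F u v) u := by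
  rw [pdA_eq hF]; exact hdA hF u v

theorem hdB' (hF : Sm F) (u v : ℝ) : HasDerivAt (fun t => F u t) (pdB F u v) v := by
  rw [pdB_eq hF]; exact hdB hF u v

theorem Sm.fst (hF : Sm F) : Sm (pdA F) := by
  have h : (fun p : ℝ × ℝ => pdA F p.1 p.2)
      = fun p : ℝ × ℝ => fderiv ℝ (fun q : ℝ × ℝ => F q.1 q.2) p (1, 0) := by
    funext p
    rw [pdA_eq hF]
  unfold Sm
  rw [h]
  exact (hF.fderiv_right (by simp)).clm_apply contDiff_const

theorem Sm.snd (hF : Sm F) : Sm (pdB F) := by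
  have h : (fun p : ℝ × ℝ => pdB F p.1 p.2)
      = fun p : ℝ × ℝ => fderiv ℝ (fun q : ℝ × ℝ => F q.1 q.2) p (0, 1) := by
    funext p
    rw [pdB_eq hF]
  unfold Sm
  rw [h]
  exact (hF.fderiv_right (by simp)).clm_apply contDiff_const

theorem pd_swap (hF : Sm F) : pdA (pdB F) = pdB (pdA F) := by
  funext u v
  have h1 : (fun p : ℝ × ℝ => pdB F p.1 p.2)
      = fun p : ℝ × ℝ => fderiv ℝ (fun q : ℝ × ℝ => F q.1 q.2) p (0, 1) := by
    funext p; rw [pdB_eq hF]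
  have h2 : (fun p : ℝ × ℝ => pdA F p.1 p.2)
      = fun p : ℝ × ℝ => fderiv ℝ (fun q : ℝ × ℝ => F q.1 q.2) p (1, 0) := by
    funext p; rw [pdA_eq hF]
  have hd : ∀ y, HasFDerivAt (fun q : ℝ × ℝ => F q.1 q.2)
      (fderiv ℝ (fun q : ℝ × ℝ => F q.1 q.2) y) y :=
    fun y => (hF.differentiable (by simp) y).hasFDerivAt
  have hdd : HasFDerivAt (fderiv ℝ (fun q : ℝ × ℝ => F q.1 q.2))
      (fderiv ℝ (fderiv ℝ (fun q : ℝ × ℝ => F q.1 q.2)) (u, v)) (u, v) :=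
    (((hF.fderiv_right (m := 1) (WithTop.coe_le_coe.mpr le_top)).differentiable (by simp)) (u, v)).hasFDerivAt
  have hsym := second_derivative_symmetric hd hdd ((1 : ℝ), (0 : ℝ)) ((0 : ℝ), (1 : ℝ))
  have hdiff : DifferentiableAt ℝ (fderiv ℝ (fun q : ℝ × ℝ => F q.1 q.2)) (u, v) :=
    ((hF.fderiv_right (m := 1) (WithTop.coe_le_coe.mpr le_top)).differentiable (by simp)) (u, v)
  rw [pdA_eq (Sm.snd hF), pdB_eq (Sm.fst hF), h1, h2,
    fderiv_clm_apply hdiff (differentiableAt_const _),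
    fderiv_clm_apply hdiff (differentiableAt_const _)]
  simp [hsym]

end Helpers

/-- Partial derivative in the first variable (vector-valued). -/
noncomputable def pd1 (F : ℝ → ℝ → (Fin 4 → ℝ)) : ℝ → ℝ → (Fin 4 → ℝ) :=
  fun u v => deriv (fun t => F t v) u

/-- Partial derivative in the second variable (vector-valued). -/
noncomputable def pd2 (F : ℝ → ℝ → (Fin 4 → ℝ)) : ℝ → ℝ → (Fin 4 → ℝ) :=
  fun u v => deriv (fun t => F u t) v

/-- Partial derivative in the first variable (scalar). -/
noncomputable def spd1 (f : ℝ → ℝ → ℝ) : ℝ → ℝ → ℝ :=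
  fun u v => deriv (fun t => f t v) u

/-- Partial derivative in the second variable (scalar). -/
noncomputable def spd2 (f : ℝ → ℝ → ℝ) : ℝ → ℝ → ℝ :=
  fun u v => deriv (fun t => f u t) v

/-- The coefficients of the Wilczynski system of a canonical lift necessarily satisfy
the integrability conditions `a b_v + 2 a_v b + b_uu + 2β_u = 0` and
`b a_u + 2 b_u a + a_vv + 2α_v = 0`. -/
theorem stmt_15 (X : ℝ → ℝ → (Fin 4 → ℝ)) (a b α β : ℝ → ℝ → ℝ)
    (hX : ContDiff ℝ (⊤ : ℕ∞) (fun p : ℝ × ℝ => X p.1 p.2))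
    (ha : ContDiff ℝ (⊤ : ℕ∞) (fun p : ℝ × ℝ => a p.1 p.2))
    (hb : ContDiff ℝ (⊤ : ℕ∞) (fun p : ℝ × ℝ => b p.1 p.2))
    (hα : ContDiff ℝ (⊤ : ℕ∞) (fun p : ℝ × ℝ => α p.1 p.2))
    (hβ : ContDiff ℝ (⊤ : ℕ∞) (fun p : ℝ × ℝ => β p.1 p.2))
    (hbasis : ∀ u v, LinearIndependent ℝ ![X u v, pd1 X u v, pd2 X u v, pd2 (pd1 X) u v])
    (hdet : ∀ u v, Matrix.det (Matrix.of ![X u v, pd1 X u v, pd2 X u v, pd2 (pd1 X) u v]) = 1)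
    (hsys1 : ∀ u v, pd1 (pd1 X) u v + a u v • pd2 X u v + α u v • X u v = 0)
    (hsys2 : ∀ u v, pd2 (pd2 X) u v + b u v • pd1 X u v + β u v • X u v = 0) :
    ∀ u v, a u v * spd2 b u v + 2 * spd2 a u v * b u v + spd1 (spd1 b) u v +
        2 * spd1 β u v = 0 ∧
      b u v * spd1 a u v + 2 * spd1 b u v * a u v + spd2 (spd2 a) u v +
        2 * spd2 α u v = 0 := by
  -- rephrase everything in terms of pdA/pdB
  have smX : Sm X := hX
  have sma : Sm a := ha
  have smb : Sm b := hb
  have smα : Sm α := hα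
  have smβ : Sm β := hβ
  have smX1 : Sm (pdA X) := smX.fst
  have smX2 : Sm (pdB X) := smX.snd
  have hsys1' : ∀ u v, pdA (pdA X) u v + a u v • pdB X u v + α u v • X u v = 0 := hsys1
  have hsys2' : ∀ u v, pdB (pdB X) u v + b u v • pdA X u v + β u v • X u v = 0 := hsys2
  have e1 : ∀ u v, pdA (pdA X) u v = -(a u v • pdB X u v + α u v • X u v) := by
    intro u v
    linear_combination (norm := module) hsys1' u v
  have e2 : ∀ u v, pdB (pdB X) u v = -(b u v • pdA X u v + β u v • X u v) := by
    intro u v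
    linear_combination (norm := module) hsys2' u v
  -- first v-derivative of the first system
  have h1 : ∀ u v, pdB (pdA (pdA X)) u v =
      (a u v * b u v) • pdA X u v + (a u v * β u v - pdB α u v) • X u v
        - (pdB a u v + α u v) • pdB X u v := by
    intro u v
    have hD := ((((hdB' sma u v).smul (hdB' smX2 u v)).add
        ((hdB' smα u v).smul (hdB' smX u v))).neg).congr_of_eventuallyEq
      (Filter.Eventually.of_forall fun t => e1 u t)
    have hv : pdB (pdA (pdA X)) u v = _ := hD.deriv
    rw [e2 u v] at hv
    linear_combination (norm := module) hv
  -- second v-derivative of the first system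
  have h2 : ∀ u v, pdB (pdB (pdA (pdA X))) u v =
      (pdB a u v * b u v + a u v * pdB b u v + b u v * (pdB a u v + α u v)) • pdA X u v
      + (a u v * b u v) • pdB (pdA X) u v
      + (pdB a u v * β u v + a u v * pdB β u v - pdB (pdB α) u v
          + β u v * (pdB a u v + α u v)) • X u v
      + (a u v * β u v - pdB α u v - (pdB (pdB a) u v + pdB α u v)) • pdB X u v := by
    intro u v
    have hD := (((((hdB' sma u v).mul (hdB' smb u v)).smul (hdB' smX1 u v)).add
        ((((hdB' sma u v).mul (hdB' smβ u v)).sub (hdB' smα.snd u v)).smul (hdB' smX u v))).sub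
        (((hdB' sma.snd u v).add (hdB' smα u v)).smul (hdB' smX2 u v))).congr_of_eventuallyEq
      (Filter.Eventually.of_forall fun t => h1 u t)
    have hv : pdB (pdB (pdA (pdA X))) u v = _ := hD.deriv
    rw [e2 u v] at hv
    simp only [Pi.mul_apply, Pi.sub_apply, Pi.add_apply] at hv
    linear_combination (norm := module) hv
  -- first u-derivative of the second system
  have h1' : ∀ u v, pdA (pdB (pdB X)) u v =
      (b u v * a u v) • pdB X u v + (b u v * α u v - pdA β u v) • X u v
        - (pdA b u v + β u v) • pdA X u v := by
    intro u v
    have hD := ((((hdA' smb u v).smul (hdA' smX1 u v)).add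
        ((hdA' smβ u v).smul (hdA' smX u v))).neg).congr_of_eventuallyEq
      (Filter.Eventually.of_forall fun t => e2 t v)
    have hv : pdA (pdB (pdB X)) u v = _ := hD.deriv
    rw [e1 u v] at hv
    linear_combination (norm := module) hv
  -- second u-derivative of the second system
  have hswX : pdA (pdB X) = pdB (pdA X) := pd_swap smX
  have h2' : ∀ u v, pdA (pdA (pdB (pdB X))) u v =
      (pdA b u v * a u v + b u v * pdA a u v + a u v * (pdA b u v + β u v)) • pdB X u v
      + (b u v * a u v) • pdB (pdA X) u v
      + (pdA b u v * α u v + b u v * pdA α u v - pdA (pdA β) u v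
          + α u v * (pdA b u v + β u v)) • X u v
      + (b u v * α u v - pdA β u v - (pdA (pdA b) u v + pdA β u v)) • pdA X u v := by
    intro u v
    have hD := (((((hdA' smb u v).mul (hdA' sma u v)).smul (hdA' smX2 u v)).add
        ((((hdA' smb u v).mul (hdA' smα u v)).sub (hdA' smβ.fst u v)).smul (hdA' smX u v))).sub
        (((hdA' smb.fst u v).add (hdA' smβ u v)).smul (hdA' smX1 u v))).congr_of_eventuallyEq
      (Filter.Eventually.of_forall fun t => h1' t v)
    have hv : pdA (pdA (pdB (pdB X))) u v = _ := hD.deriv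
    rw [e1 u v, show pdA (pdB X) u v = pdB (pdA X) u v from congrFun (congrFun hswX u) v] at hv
    simp only [Pi.mul_apply, Pi.sub_apply, Pi.add_apply] at hv
    linear_combination (norm := module) hv
  -- equality of the two fourth-order mixed derivatives
  have hswap4 : pdA (pdA (pdB (pdB X))) = pdB (pdB (pdA (pdA X))) := by
    rw [pd_swap smX.snd, pd_swap smX, pd_swap smX1.snd, pd_swap smX1]
  intro u v
  have hs : pdA (pdA (pdB (pdB X))) u v = pdB (pdB (pdA (pdA X))) u v :=
    congrFun (congrFun hswap4 u) v
  have bigEq := (h2 u v).symm.trans (hs.symm.trans (h2' u v))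
  -- apply linear independence
  set g0 : ℝ := (pdB a u v * β u v + a u v * pdB β u v - pdB (pdB α) u v
      + β u v * (pdB a u v + α u v))
    - (pdA b u v * α u v + b u v * pdA α u v - pdA (pdA β) u v
      + α u v * (pdA b u v + β u v)) with hg0
  set g1 : ℝ := a u v * pdB b u v + 2 * pdB a u v * b u v + pdA (pdA b) u v
      + 2 * pdA β u v with hg1
  set g2 : ℝ := b u v * pdA a u v + 2 * pdA b u v * a u v + pdB (pdB a) u v
      + 2 * pdB α u v with hg2
  have hz := Fintype.linearIndependent_iff.mp (hbasis u v) ![g0, g1, -g2, 0] (by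
    rw [Fin.sum_univ_four]
    show g0 • X u v + g1 • pdA X u v + (-g2) • pdB X u v + (0 : ℝ) • pdB (pdA X) u v = 0
    linear_combination (norm := module) bigEq)
  have hz1 := hz 1
  have hz2 := hz 2
  simp only [Matrix.cons_val_one, Matrix.head_cons, Matrix.cons_val_two, Matrix.tail_cons,
    neg_eq_zero] at hz1 hz2
  exact ⟨hz1, hz2⟩
end
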